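/- arXiv:1201.0658 — 5 statements merged into one kernel-verified Lean document; each statement's English description precedes it below -/
import Mathlib

section
/- Let w, w̃ be positive non-decreasing weight functions with ∑ₙ 1/w(n) = ∞ and ∑ₙ 1/w̃(n) = ∞. If w(t) ≤ w̃(t) for all t, then α_c(w) ≥ α_c(w̃). -/
/-!
Since `1/w̃ ≤ 1/w`, the function `W̃` increases by less than `W` over every interval. Hence if
`W` increases by `α` from `x` to `y = W⁻¹(W(x) + α)`, then `W̃` has to go on past `y` to increase
by `α`, i.e. `y ≤ W̃⁻¹(W̃(x) + α)`. Combined with `w ≤ w̃` and the monotonicity of `w̃`, the integrand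
of `I_α(w̃)` is pointwise at most that of `I_α(w)`, so `I_α(w) < ∞` implies `I_α(w̃) < ∞`.
-/

open MeasureTheory Filter Topology Set
open scoped ENNReal NNReal

noncomputable section

/-- Extension of a weight sequence to the reals: `w(t) = w(⌊t⌋)` (and `w 0` for `t < 0`). -/
def wext (w : ℕ → ℝ) (t : ℝ) : ℝ := w ⌊t⌋₊

/-- `W(t) = ∫₀ᵗ du / w(u)`. -/
def Wfun (v : ℝ → ℝ) (t : ℝ) : ℝ := ∫ u in (0:ℝ)..t, (v u)⁻¹

/-- `I_α(w) = ∫₀^∞ dx / w(W⁻¹(W(x)+α))`, valued in `[0,∞]`. -/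
def Ia (v : ℝ → ℝ) (Winv : ℝ → ℝ) (α : ℝ) : ℝ≥0∞ :=
  ∫⁻ x in Ioi (0:ℝ), ENNReal.ofReal (v (Winv (Wfun v x + α)))⁻¹

/-- The critical parameter `α_c(w) = inf {α ≥ 0 : I_α(w) < ∞} ∈ [0,∞]` (inf ∅ = ∞). -/
def alphac (v : ℝ → ℝ) (Winv : ℝ → ℝ) : ℝ≥0∞ :=
  sInf (ENNReal.ofReal '' {α : ℝ | 0 < α ∧ Ia v Winv α < ⊤})

namespace WeightComparison

variable {v vt : ℝ → ℝ}

theorem wext_pos {w : ℕ → ℝ} (hpos : ∀ n, 0 < w n) (t : ℝ) : 0 < wext w t := hpos _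

theorem monotone_wext {w : ℕ → ℝ} (hmono : Monotone w) : Monotone (wext w) :=
  fun _ _ hst => hmono (Nat.floor_mono hst)

theorem antitone_inv (hpos : ∀ u, 0 < v u) (hmono : Monotone v) :
    Antitone fun u => (v u)⁻¹ :=
  fun _ _ hab => inv_anti₀ (hpos _) (hmono hab)

theorem intervalIntegrable_inv (hpos : ∀ u, 0 < v u) (hmono : Monotone v) (a b : ℝ) :
    IntervalIntegrable (fun u => (v u)⁻¹) volume a b :=
  (antitone_inv hpos hmono).intervalIntegrable

theorem Wfun_sub_Wfun (hpos : ∀ u, 0 < v u) (hmono : Monotone v) (x y : ℝ) :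
    Wfun v y - Wfun v x = ∫ u in x..y, (v u)⁻¹ :=
  intervalIntegral.integral_interval_sub_left (intervalIntegrable_inv hpos hmono 0 y)
    (intervalIntegrable_inv hpos hmono 0 x)

theorem Wfun_strictMono (hpos : ∀ u, 0 < v u) (hmono : Monotone v) : StrictMono (Wfun v) := by
  intro x y hxy
  have hint : 0 < ∫ u in x..y, (v u)⁻¹ :=
    intervalIntegral.intervalIntegral_pos_of_pos (intervalIntegrable_inv hpos hmono x y)
      (fun u => inv_pos.mpr (hpos u)) hxy
  linarith [Wfun_sub_Wfun hpos hmono x y]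

theorem Wfun_nonneg (hpos : ∀ u, 0 < v u) (hmono : Monotone v) {x : ℝ} (hx : 0 ≤ x) :
    0 ≤ Wfun v x := by
  simpa [Wfun] using (Wfun_strictMono hpos hmono).monotone hx

theorem Wfun_sub_Wfun_le_of_le (hpos : ∀ u, 0 < v u) (hmono : Monotone v)
    (hposT : ∀ u, 0 < vt u) (hmonoT : Monotone vt) (hle : ∀ u, v u ≤ vt u)
    {x y : ℝ} (hxy : x ≤ y) :
    Wfun vt y - Wfun vt x ≤ Wfun v y - Wfun v x := by
  rw [Wfun_sub_Wfun hposT hmonoT, Wfun_sub_Wfun hpos hmono]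
  exact intervalIntegral.integral_mono_on hxy (intervalIntegrable_inv hposT hmonoT x y)
    (intervalIntegrable_inv hpos hmono x y) fun u _ => inv_anti₀ (hpos u) (hle u)

theorem Winv_shift_le_Winv_shift (hpos : ∀ u, 0 < v u) (hmono : Monotone v)
    (hposT : ∀ u, 0 < vt u) (hmonoT : Monotone vt) (hle : ∀ u, v u ≤ vt u)
    {Winv WinvT : ℝ → ℝ} (hWinv : ∀ y, 0 ≤ y → Wfun v (Winv y) = y)
    (hWinvT : ∀ y, 0 ≤ y → Wfun vt (WinvT y) = y) {x α : ℝ} (hx : 0 ≤ x) (hα : 0 ≤ α) :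
    Winv (Wfun v x + α) ≤ WinvT (Wfun vt x + α) := by
  set y := Winv (Wfun v x + α)
  have hWy : Wfun v y = Wfun v x + α := hWinv _ (by linarith [Wfun_nonneg hpos hmono hx])
  have hWz : Wfun vt (WinvT (Wfun vt x + α)) = Wfun vt x + α :=
    hWinvT _ (by linarith [Wfun_nonneg hposT hmonoT hx])
  have hxy : x ≤ y := (Wfun_strictMono hpos hmono).le_iff_le.mp (by linarith)
  have hincr := Wfun_sub_Wfun_le_of_le hpos hmono hposT hmonoT hle hxy
  exact (Wfun_strictMono hposT hmonoT).le_iff_le.mp (by linarith)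

theorem Ia_le_Ia (hpos : ∀ u, 0 < v u) (hmono : Monotone v)
    (hposT : ∀ u, 0 < vt u) (hmonoT : Monotone vt) (hle : ∀ u, v u ≤ vt u)
    {Winv WinvT : ℝ → ℝ} (hWinv : ∀ y, 0 ≤ y → Wfun v (Winv y) = y)
    (hWinvT : ∀ y, 0 ≤ y → Wfun vt (WinvT y) = y) {α : ℝ} (hα : 0 ≤ α) :
    Ia vt WinvT α ≤ Ia v Winv α := by
  refine setLIntegral_mono_ae' measurableSet_Ioi (ae_of_all _ fun x hx => ?_)
  have hshift := Winv_shift_le_Winv_shift hpos hmono hposT hmonoT hle hWinv hWinvT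
    (le_of_lt hx) hα
  exact ENNReal.ofReal_le_ofReal (inv_anti₀ (hpos _) ((hle _).trans (hmonoT hshift)))

theorem alphac_le_alphac (hpos : ∀ u, 0 < v u) (hmono : Monotone v)
    (hposT : ∀ u, 0 < vt u) (hmonoT : Monotone vt) (hle : ∀ u, v u ≤ vt u)
    {Winv WinvT : ℝ → ℝ} (hWinv : ∀ y, 0 ≤ y → Wfun v (Winv y) = y)
    (hWinvT : ∀ y, 0 ≤ y → Wfun vt (WinvT y) = y) :
    alphac vt WinvT ≤ alphac v Winv := by
  refine sInf_le_sInf (image_mono fun α ⟨hα, hfin⟩ => ⟨hα, lt_of_le_of_lt ?_ hfin⟩)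
  exact Ia_le_Ia hpos hmono hposT hmonoT hle hWinv hWinvT hα.le

end WeightComparison

open WeightComparison in
theorem stmt3_general (w wt : ℕ → ℝ) (hpos : ∀ n, 0 < w n) (hposT : ∀ n, 0 < wt n)
    (hmono : Monotone w) (hmonoT : Monotone wt)
    (hle : ∀ n, w n ≤ wt n)
    (Winv WinvT : ℝ → ℝ)
    (hWinv' : ∀ y : ℝ, 0 ≤ y → Wfun (wext w) (Winv y) = y)
    (hWinvT' : ∀ y : ℝ, 0 ≤ y → Wfun (wext wt) (WinvT y) = y) :
    alphac (wext wt) WinvT ≤ alphac (wext w) Winv :=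
  alphac_le_alphac (wext_pos hpos) (monotone_wext hmono) (wext_pos hposT)
    (monotone_wext hmonoT) (fun t => hle ⌊t⌋₊) hWinv' hWinvT'

/-- monotonicity: if `w ≤ w̃` pointwise then `α_c(w) ≥ α_c(w̃)`. -/
theorem stmt3 (w wt : ℕ → ℝ) (hpos : ∀ n, 0 < w n) (hposT : ∀ n, 0 < wt n)
    (hmono : Monotone w) (hmonoT : Monotone wt)
    (hdiv : ¬ Summable (fun n : ℕ => (w n)⁻¹))
    (hdivT : ¬ Summable (fun n : ℕ => (wt n)⁻¹))
    (hle : ∀ n, w n ≤ wt n)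
    (Winv WinvT : ℝ → ℝ)
    (hWinv : ∀ t : ℝ, 0 ≤ t → Winv (Wfun (wext w) t) = t)
    (hWinv' : ∀ y : ℝ, 0 ≤ y → Wfun (wext w) (Winv y) = y)
    (hWinvT : ∀ t : ℝ, 0 ≤ t → WinvT (Wfun (wext wt) t) = t)
    (hWinvT' : ∀ y : ℝ, 0 ≤ y → Wfun (wext wt) (WinvT y) = y) :
    alphac (wext wt) WinvT ≤ alphac (wext w) Winv :=
  stmt3_general w wt hpos hposT hmono hmonoT hle Winv WinvT hWinv' hWinvT'
end
end

section
/- Let w, w̃ be positive non-decreasing weight functions with diverging sums ∑ 1/w(n) = ∑ 1/w̃(n) = ∞, and suppose w(x) = w̃(x) for all x ≥ x₀ for some x₀ ≥ 0. Then α_c(w) = α_c(w̃). -/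
open MeasureTheory Filter Topology Set
open scoped ENNReal NNReal

noncomputable section

/-!
Beyond `x₀` the two functions `W` differ by a constant, so `W⁻¹(W(x) + α)` is the same point
for both weights whenever `x ≥ x₀`: the integrands of `I_α(w)` and `I_α(w̃)` coincide on
`(x₀, ∞)`. On `(0, x₀]` they are bounded by `1/w(0)` and `1/w̃(0)`, so `I_α(w) < ∞` if and only
if `I_α(w̃) < ∞`, and the critical parameters agree.
-/

lemma setLIntegral_Ioi_lt_top_iff_of_le {f : ℝ → ℝ≥0∞} {a b : ℝ} (hab : b ≤ a) {C : ℝ≥0∞}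
    (hC : C ≠ ⊤) (hf : ∀ x, f x ≤ C) :
    ∫⁻ x in Ioi b, f x < ⊤ ↔ ∫⁻ x in Ioi a, f x < ⊤ := by
  have hIoc : ∫⁻ x in Ioc b a, f x < ⊤ :=
    calc ∫⁻ x in Ioc b a, f x
        ≤ ∫⁻ _ in Ioc b a, C := lintegral_mono hf
      _ = C * volume (Ioc b a) := setLIntegral_const _ _
      _ < ⊤ := ENNReal.mul_lt_top hC.lt_top measure_Ioc_lt_top
  rw [← Ioc_union_Ioi_eq_Ioi hab, lintegral_union measurableSet_Ioi (Ioc_disjoint_Ioi le_rfl),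
    ENNReal.add_lt_top]
  exact and_iff_right hIoc

lemma setLIntegral_Ioi_lt_top_iff_of_eqOn {f g : ℝ → ℝ≥0∞} {a b : ℝ} (hab : b ≤ a)
    {C D : ℝ≥0∞} (hC : C ≠ ⊤) (hD : D ≠ ⊤) (hf : ∀ x, f x ≤ C) (hg : ∀ x, g x ≤ D)
    (hfg : EqOn f g (Ioi a)) :
    ∫⁻ x in Ioi b, f x < ⊤ ↔ ∫⁻ x in Ioi b, g x < ⊤ := by
  rw [setLIntegral_Ioi_lt_top_iff_of_le hab hC hf, setLIntegral_Ioi_lt_top_iff_of_le hab hD hg,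
    setLIntegral_congr_fun measurableSet_Ioi hfg]

section Wfun

variable {v v₁ v₂ : ℝ → ℝ}

lemma Wfun_eq_add_integral (hv : ∀ a b, IntervalIntegrable (fun u => (v u)⁻¹) volume a b)
    (a b : ℝ) : Wfun v b = Wfun v a + ∫ u in a..b, (v u)⁻¹ :=
  (intervalIntegral.integral_add_adjacent_intervals (hv 0 a) (hv a b)).symm

lemma Wfun_nonneg (hv : ∀ u, 0 ≤ v u) {t : ℝ} (ht : 0 ≤ t) : 0 ≤ Wfun v t :=
  intervalIntegral.integral_nonneg ht fun u _ => inv_nonneg.2 (hv u)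

lemma Wfun_strictMono (hv : ∀ u, 0 < v u)
    (hint : ∀ a b, IntervalIntegrable (fun u => (v u)⁻¹) volume a b) :
    StrictMono (Wfun v) := by
  intro a b hab
  have hpos : 0 < ∫ u in a..b, (v u)⁻¹ :=
    intervalIntegral.intervalIntegral_pos_of_pos_on (hint a b) (fun u _ => inv_pos.2 (hv u)) hab
  linarith [Wfun_eq_add_integral hint a b]

lemma Wfun_sub_eq_of_eqOn (hv₁ : ∀ a b, IntervalIntegrable (fun u => (v₁ u)⁻¹) volume a b)
    (hv₂ : ∀ a b, IntervalIntegrable (fun u => (v₂ u)⁻¹) volume a b) {a : ℝ}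
    (heq : EqOn v₁ v₂ (Ici a)) {t : ℝ} (ht : a ≤ t) :
    Wfun v₁ t - Wfun v₁ a = Wfun v₂ t - Wfun v₂ a := by
  have hint : ∫ u in a..t, (v₁ u)⁻¹ = ∫ u in a..t, (v₂ u)⁻¹ :=
    intervalIntegral.integral_congr fun u hu => by
      rw [uIcc_of_le ht] at hu
      simp only [heq hu.1]
  rw [Wfun_eq_add_integral hv₁ a t, Wfun_eq_add_integral hv₂ a t, hint]
  ring

end Wfun

lemma self_le_inv_add {W Winv : ℝ → ℝ} (hW : StrictMono W) (hWinv : ∀ y, 0 ≤ y → W (Winv y) = y)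
    {x α : ℝ} (hWx : 0 ≤ W x) (hα : 0 ≤ α) : x ≤ Winv (W x + α) :=
  hW.le_iff_le.1 (by rw [hWinv _ (by linarith)]; linarith)

lemma inv_add_eq_of_sub_eq {W₁ W₂ Winv₁ Winv₂ : ℝ → ℝ} (hW₁ : StrictMono W₁)
    (hWinv₁ : ∀ y, 0 ≤ y → W₁ (Winv₁ y) = y) (hWinv₂ : ∀ t, 0 ≤ t → Winv₂ (W₂ t) = t)
    {a : ℝ} (ha : 0 ≤ a) (hshift : ∀ t, a ≤ t → W₁ t - W₁ a = W₂ t - W₂ a)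
    {x α : ℝ} (hx : a ≤ x) (hWx : 0 ≤ W₁ x) (hα : 0 ≤ α) :
    Winv₂ (W₂ x + α) = Winv₁ (W₁ x + α) := by
  set y := Winv₁ (W₁ x + α)
  have hxy : x ≤ y := self_le_inv_add hW₁ hWinv₁ hWx hα
  have hW₂y : W₂ y = W₂ x + α := by
    linarith [hshift y (hx.trans hxy), hshift x hx, hWinv₁ (W₁ x + α) (by linarith)]
  rw [← hW₂y, hWinv₂ y (ha.trans (hx.trans hxy))]

section wext

variable {w : ℕ → ℝ}

lemma wext_monotone (hmono : Monotone w) : Monotone (wext w) :=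
  fun _ _ h => hmono (Nat.floor_mono h)

lemma inv_wext_le (hpos : ∀ n, 0 < w n) (hmono : Monotone w) (t : ℝ) :
    (wext w t)⁻¹ ≤ (w 0)⁻¹ :=
  inv_anti₀ (hpos 0) (hmono (Nat.zero_le _))

lemma inv_wext_antitone (hpos : ∀ n, 0 < w n) (hmono : Monotone w) :
    Antitone fun u => (wext w u)⁻¹ :=
  fun _ _ h => inv_anti₀ (hpos _) (wext_monotone hmono h)

lemma intervalIntegrable_inv_wext (hpos : ∀ n, 0 < w n) (hmono : Monotone w) (a b : ℝ) :
    IntervalIntegrable (fun u => (wext w u)⁻¹) volume a b :=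
  (inv_wext_antitone hpos hmono).intervalIntegrable

end wext

theorem stmt5_general (w wt : ℕ → ℝ) (hpos : ∀ n, 0 < w n) (hposT : ∀ n, 0 < wt n)
    (hmono : Monotone w) (hmonoT : Monotone wt)
    (x₀ : ℕ) (heq : ∀ n : ℕ, x₀ ≤ n → w n = wt n)
    (Winv WinvT : ℝ → ℝ)
    (hWinv' : ∀ y : ℝ, 0 ≤ y → Wfun (wext w) (Winv y) = y)
    (hWinvT : ∀ t : ℝ, 0 ≤ t → WinvT (Wfun (wext wt) t) = t) :
    alphac (wext w) Winv = alphac (wext wt) WinvT := by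
  have heqOn : EqOn (wext w) (wext wt) (Ici (x₀ : ℝ)) := fun u hu => heq _ (Nat.le_floor hu)
  have hshift : ∀ t, (x₀ : ℝ) ≤ t →
      Wfun (wext w) t - Wfun (wext w) x₀ = Wfun (wext wt) t - Wfun (wext wt) x₀ :=
    fun _ => Wfun_sub_eq_of_eqOn (intervalIntegrable_inv_wext hpos hmono)
      (intervalIntegrable_inv_wext hposT hmonoT) heqOn
  have hW : StrictMono (Wfun (wext w)) :=
    Wfun_strictMono (fun _ => hpos _) (intervalIntegrable_inv_wext hpos hmono)
  have hIa : ∀ α : ℝ, 0 < α → (Ia (wext w) Winv α < ⊤ ↔ Ia (wext wt) WinvT α < ⊤) := by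
    intro α hα
    refine setLIntegral_Ioi_lt_top_iff_of_eqOn (Nat.cast_nonneg x₀) ENNReal.ofReal_ne_top
      ENNReal.ofReal_ne_top (fun x => ENNReal.ofReal_le_ofReal (inv_wext_le hpos hmono _))
      (fun x => ENNReal.ofReal_le_ofReal (inv_wext_le hposT hmonoT _)) fun x hx => ?_
    have hx : (x₀ : ℝ) ≤ x := le_of_lt hx
    have hWx : 0 ≤ Wfun (wext w) x :=
      Wfun_nonneg (fun u => (hpos _).le) ((Nat.cast_nonneg x₀).trans hx)
    rw [inv_add_eq_of_sub_eq hW hWinv' hWinvT (Nat.cast_nonneg x₀) hshift hx hWx hα.le,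
      heqOn (hx.trans (self_le_inv_add hW hWinv' hWx hα.le))]
  unfold alphac
  congr 2
  ext α
  exact and_congr_right (hIa α)

/-- if `w = w̃` from some point `x₀` on, then `α_c(w) = α_c(w̃)`. -/
theorem stmt5 (w wt : ℕ → ℝ) (hpos : ∀ n, 0 < w n) (hposT : ∀ n, 0 < wt n)
    (hmono : Monotone w) (hmonoT : Monotone wt)
    (hdiv : ¬ Summable (fun n : ℕ => (w n)⁻¹))
    (hdivT : ¬ Summable (fun n : ℕ => (wt n)⁻¹))
    (x₀ : ℕ) (heq : ∀ n : ℕ, x₀ ≤ n → w n = wt n)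
    (Winv WinvT : ℝ → ℝ)
    (hWinv : ∀ t : ℝ, 0 ≤ t → Winv (Wfun (wext w) t) = t)
    (hWinv' : ∀ y : ℝ, 0 ≤ y → Wfun (wext w) (Winv y) = y)
    (hWinvT : ∀ t : ℝ, 0 ≤ t → WinvT (Wfun (wext wt) t) = t)
    (hWinvT' : ∀ y : ℝ, 0 ≤ y → Wfun (wext wt) (WinvT y) = y) :
    alphac (wext w) Winv = alphac (wext wt) WinvT :=
  stmt5_general w wt hpos hposT hmono hmonoT x₀ heq Winv WinvT hWinv' hWinvT
end
end

section
/- Let w be a positive non-decreasing weight function with diverging W and α_c(w) < ∞. Then liminf_{x→∞} w(x)/x ≥ 1/α_c(w). In particular, if α_c(w) < ∞ then ∑ₙ 1/w(n)² < ∞, and if α_c(w) = 0 then w(x)/x → ∞. -/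
open MeasureTheory Filter Topology Set
open scoped ENNReal NNReal

noncomputable section

/-!
Put `x = W⁻¹(W(z) - α)`. As `1/w` is antitone, `W(z) - W(x) = α` gives `z - x ≤ α w(z)`, while the
integrand of `I_α` at `x` is exactly `1/w(z)`. This integrand is antitone, so when `I_α < ∞` it is
`o(1/x)`, i.e. `x = o(w(z))`. Hence `z ≤ (α + o(1)) w(z)` and `liminf w(z)/z ≥ 1/α` for every `α`
with `I_α < ∞`. A positive liminf gives `w(n) ≥ c n` for large `n`, hence `∑ 1/w(n)² < ∞`.
-/

theorem Antitone.sub_mul_le_intervalIntegral {f : ℝ → ℝ} (hf : Antitone f) {a b : ℝ}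
    (hab : a ≤ b) : (b - a) * f b ≤ ∫ u in a..b, f u := by
  have h := intervalIntegral.integral_mono_on hab intervalIntegrable_const
    (hf.intervalIntegrable (μ := volume)) fun x hx => hf hx.2
  simpa [intervalIntegral.integral_const, mul_comm] using h

/-- `(t/2) f t ≤ ∫_{t/2}^t f`, a difference of two integrals with the same limit `∫_{Ioi 0} f`. -/
theorem Antitone.tendsto_mul_atTop_zero {f : ℝ → ℝ} (hf : Antitone f) (hf0 : ∀ x, 0 ≤ f x)
    (hfi : IntegrableOn f (Ioi 0)) : Tendsto (fun t => t * f t) atTop (𝓝 0) := by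
  have hI := intervalIntegral_tendsto_integral_Ioi 0 hfi tendsto_id
  have hI2 := intervalIntegral_tendsto_integral_Ioi 0 hfi (tendsto_id.atTop_div_const two_pos)
  have htail : Tendsto (fun t => 2 * ((∫ u in (0:ℝ)..t, f u) - ∫ u in (0:ℝ)..t / 2, f u))
      atTop (𝓝 0) := by
    simpa using (hI.sub hI2).const_mul 2
  refine tendsto_of_tendsto_of_tendsto_of_le_of_le' tendsto_const_nhds htail ?_ ?_
  · filter_upwards [eventually_ge_atTop 0] with t ht using mul_nonneg ht (hf0 t)
  · filter_upwards [eventually_ge_atTop 0] with t ht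
    rw [intervalIntegral.integral_interval_sub_left hf.intervalIntegrable hf.intervalIntegrable]
    have h := hf.sub_mul_le_intervalIntegral (half_le_self ht)
    linarith

theorem inv_ofReal_le_liminf {g : ℝ → ℝ} {α : ℝ} (hα : 0 ≤ α)
    (h : ∀ ε > 0, ∀ᶠ z in atTop, z ≤ (α + ε) * g z) :
    (ENNReal.ofReal α)⁻¹ ≤ liminf (fun x => ENNReal.ofReal (g x / x)) atTop := by
  have hbound : ∀ ε > 0,
      (ENNReal.ofReal (α + ε))⁻¹ ≤ liminf (fun x => ENNReal.ofReal (g x / x)) atTop := by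
    intro ε hε
    rw [← ENNReal.ofReal_inv_of_pos (by linarith)]
    refine le_liminf_of_le (by isBoundedDefault) ?_
    filter_upwards [h ε hε, eventually_gt_atTop 0] with z hz hz0
    refine ENNReal.ofReal_le_ofReal ?_
    rwa [le_div_iff₀ hz0, inv_mul_le_iff₀ (by linarith)]
  have hcont : Continuous fun ε => (ENNReal.ofReal (α + ε))⁻¹ :=
    continuous_inv.comp (ENNReal.continuous_ofReal.comp (continuous_const_add α))
  have htend := (hcont.tendsto 0).mono_left (nhdsWithin_le_nhds (s := Ioi 0))
  rw [add_zero] at htend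
  exact le_of_tendsto htend (eventually_nhdsWithin_of_forall hbound)

theorem summable_inv_sq_of_pos_liminf {g : ℝ → ℝ}
    (h : 0 < liminf (fun x => ENNReal.ofReal (g x / x)) atTop) :
    Summable fun n : ℕ => ((g n) ^ 2)⁻¹ := by
  obtain ⟨c, -, hc0, hcL⟩ := ENNReal.lt_iff_exists_real_btwn.1 h
  have hc : 0 < c := ENNReal.ofReal_pos.1 hc0
  have hlin : ∀ᶠ n : ℕ in atTop, c * n < g n := by
    filter_upwards [tendsto_natCast_atTop_atTop.eventually (eventually_lt_of_lt_liminf hcL),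
      eventually_gt_atTop 0] with n hn hn0
    exact (lt_div_iff₀ (Nat.cast_pos.2 hn0)).1 (ENNReal.ofReal_lt_ofReal_iff'.1 hn).1
  refine ((Real.summable_nat_pow_inv.2 one_lt_two).mul_left (c ^ 2)⁻¹)
    |>.of_norm_bounded_eventually_nat ?_
  filter_upwards [hlin, eventually_gt_atTop 0] with n hn hn0
  rw [Real.norm_of_nonneg (by positivity), ← mul_inv, ← mul_pow]
  exact inv_anti₀ (by positivity) (pow_le_pow_left₀ (by positivity) hn.le 2)

theorem tendsto_atTop_of_liminf_ofReal_eq_top {ι : Type*} {l : Filter ι} {g : ι → ℝ}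
    (h : liminf (fun x => ENNReal.ofReal (g x)) l = ⊤) : Tendsto g l atTop :=
  tendsto_atTop.2 fun b => (eventually_lt_of_lt_liminf (h ▸ ENNReal.ofReal_lt_top)).mono
    fun _ hx => (ENNReal.ofReal_lt_ofReal_iff'.1 hx).1.le

/-- The integrand of `Ia v Winv α`, extended to `x < 0` by its value at `0` so that it is
antitone on all of `ℝ`. -/
def iaIntegrand (v Winv : ℝ → ℝ) (α x : ℝ) : ℝ := (v (Winv (Wfun v (max x 0) + α)))⁻¹

section Weight

variable {v : ℝ → ℝ} (hv : Monotone v) (hvpos : ∀ x, 0 < v x)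
include hv hvpos

theorem antitone_inv_weight : Antitone fun u => (v u)⁻¹ :=
  fun _ _ hab => inv_anti₀ (hvpos _) (hv hab)

theorem sub_mul_inv_le_Wfun_sub {a b : ℝ} (hab : a ≤ b) :
    (b - a) * (v b)⁻¹ ≤ Wfun v b - Wfun v a := by
  rw [Wfun, Wfun, intervalIntegral.integral_interval_sub_left
    (antitone_inv_weight hv hvpos).intervalIntegrable
    (antitone_inv_weight hv hvpos).intervalIntegrable]
  exact (antitone_inv_weight hv hvpos).sub_mul_le_intervalIntegral hab

theorem Wfun_strictMono_s9 : StrictMono (Wfun v) := fun a b hab => by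
  have := sub_mul_inv_le_Wfun_sub hv hvpos hab.le
  have : 0 < (b - a) * (v b)⁻¹ := mul_pos (by linarith) (inv_pos.2 (hvpos b))
  linarith

theorem Wfun_nonneg_s9 {x : ℝ} (hx : 0 ≤ x) : 0 ≤ Wfun v x := by
  simpa [Wfun] using (Wfun_strictMono_s9 hv hvpos).monotone hx

theorem sub_le_mul_of_Wfun_sub_le {x z α : ℝ} (hα : 0 ≤ α) (h : Wfun v z - Wfun v x ≤ α) :
    z - x ≤ α * v z := by
  rcases le_or_gt x z with hxz | hzx
  · have h' := (sub_mul_inv_le_Wfun_sub hv hvpos hxz).trans h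
    rwa [← div_eq_mul_inv, div_le_iff₀ (hvpos z)] at h'
  · nlinarith [hvpos z]

variable {Winv : ℝ → ℝ} (hWinv' : ∀ y : ℝ, 0 ≤ y → Wfun v (Winv y) = y)
include hWinv'

theorem le_Winv_iff {t y : ℝ} (hy : 0 ≤ y) : t ≤ Winv y ↔ Wfun v t ≤ y := by
  rw [← (Wfun_strictMono_s9 hv hvpos).le_iff_le, hWinv' y hy]

theorem antitone_iaIntegrand {α : ℝ} (hα : 0 ≤ α) : Antitone (iaIntegrand v Winv α) := by
  intro a b hab
  have hWa : 0 ≤ Wfun v (max a 0) + α := add_nonneg (Wfun_nonneg_s9 hv hvpos (le_max_right _ _)) hα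
  have hWab : Wfun v (max a 0) + α ≤ Wfun v (max b 0) + α := by
    gcongr
    exact (Wfun_strictMono_s9 hv hvpos).monotone (max_le_max_right 0 hab)
  refine inv_anti₀ (hvpos _) (hv ?_)
  rwa [le_Winv_iff hv hvpos hWinv' (hWa.trans hWab), hWinv' _ hWa]

theorem integrableOn_iaIntegrand {α : ℝ} (hα : 0 ≤ α) (hI : Ia v Winv α < ⊤) :
    IntegrableOn (iaIntegrand v Winv α) (Ioi 0) := by
  refine ⟨(antitone_iaIntegrand hv hvpos hWinv' hα).measurable.aestronglyMeasurable,
    (hasFiniteIntegral_iff_ofReal (ae_of_all _ fun x => (inv_pos.2 (hvpos _)).le)).2 ?_⟩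
  refine lt_of_eq_of_lt (setLIntegral_congr_fun measurableSet_Ioi fun x hx => ?_) hI
  rw [max_eq_left (mem_Ioi.1 hx).le]

theorem tendsto_Winv_Wfun_sub (hW : Tendsto (Wfun v) atTop atTop) (α : ℝ) :
    Tendsto (fun z => Winv (Wfun v z - α)) atTop atTop := by
  refine tendsto_atTop.2 fun T => ?_
  filter_upwards [hW.eventually_ge_atTop (max (Wfun v T) 0 + α)] with z hz
  have := le_max_left (Wfun v T) 0
  have := le_max_right (Wfun v T) 0
  rw [le_Winv_iff hv hvpos hWinv'] <;> linarith

variable (hWinv : ∀ t : ℝ, 0 ≤ t → Winv (Wfun v t) = t)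
include hWinv

theorem eventually_le_mul_of_Ia_lt_top (hW : Tendsto (Wfun v) atTop atTop) {α : ℝ} (hα : 0 ≤ α)
    (hI : Ia v Winv α < ⊤) {ε : ℝ} (hε : 0 < ε) : ∀ᶠ z in atTop, z ≤ (α + ε) * v z := by
  have hsmall := ((antitone_iaIntegrand hv hvpos hWinv' hα).tendsto_mul_atTop_zero
    (fun x => (inv_pos.2 (hvpos _)).le) (integrableOn_iaIntegrand hv hvpos hWinv' hα hI)).comp
    (tendsto_Winv_Wfun_sub hv hvpos hWinv' hW α)
  filter_upwards [hsmall.eventually (Iic_mem_nhds hε), eventually_ge_atTop 0,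
    hW.eventually_ge_atTop α] with z hxε hz hαz
  simp only [Function.comp_apply] at hxε
  set x := Winv (Wfun v z - α)
  have hWx : Wfun v x = Wfun v z - α := hWinv' _ (by linarith)
  have hx0 : 0 ≤ x := by
    rw [le_Winv_iff hv hvpos hWinv' (by linarith), Wfun, intervalIntegral.integral_same]
    linarith
  have hGx : iaIntegrand v Winv α x = (v z)⁻¹ := by
    rw [iaIntegrand, max_eq_left hx0, hWx, sub_add_cancel, hWinv z hz]
  have hxle : x ≤ ε * v z := by
    have : x * (v z)⁻¹ ≤ ε := by simpa [hGx] using hxε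
    rwa [← div_eq_mul_inv, div_le_iff₀ (hvpos z)] at this
  have hzx : z - x ≤ α * v z := sub_le_mul_of_Wfun_sub_le hv hvpos hα (by linarith)
  linarith

theorem inv_alphac_le_liminf (hW : Tendsto (Wfun v) atTop atTop) :
    (alphac v Winv)⁻¹ ≤ liminf (fun x => ENNReal.ofReal (v x / x)) atTop := by
  rw [alphac, ENNReal.inv_sInf]
  refine iSup₂_le ?_
  rintro _ ⟨α, ⟨hα, hI⟩, rfl⟩
  exact inv_ofReal_le_liminf hα.le fun ε hε =>
    eventually_le_mul_of_Ia_lt_top hv hvpos hWinv' hWinv hW hα.le hI hε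

end Weight

theorem monotone_wext {w : ℕ → ℝ} (hmono : Monotone w) : Monotone (wext w) :=
  fun _ _ hab => hmono (Nat.floor_mono hab)

theorem tendsto_Wfun_wext_atTop {w : ℕ → ℝ} (hpos : ∀ n, 0 < w n) (hmono : Monotone w)
    (hdiv : ¬ Summable fun n => (w n)⁻¹) : Tendsto (Wfun (wext w)) atTop atTop := by
  have hv := monotone_wext hmono
  have hvpos : ∀ x, 0 < wext w x := fun _ => hpos _
  have hsum : Tendsto (fun n => ∑ k ∈ Finset.range n, (w (k + 1))⁻¹) atTop atTop :=
    (not_summable_iff_tendsto_nat_atTop_of_nonneg fun k => (inv_pos.2 (hpos _)).le).1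
      (mt (summable_nat_add_iff 1 (f := fun n => (w n)⁻¹)).1 hdiv)
  refine tendsto_atTop_atTop_of_monotone (Wfun_strictMono_s9 hv hvpos).monotone fun b => ?_
  obtain ⟨n, hn⟩ := (hsum.eventually_ge_atTop b).exists
  refine ⟨n, hn.trans ?_⟩
  have htel : Wfun (wext w) n =
      ∑ k ∈ Finset.range n, (Wfun (wext w) ↑(k + 1) - Wfun (wext w) k) := by
    rw [Finset.sum_range_sub (fun k : ℕ => Wfun (wext w) k)]
    simp [Wfun]
  rw [htel]
  gcongr with k
  have h := sub_mul_inv_le_Wfun_sub hv hvpos (Nat.cast_le.2 (Nat.le_succ k)) (b := ↑(k + 1))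
  rw [wext, Nat.floor_natCast] at h
  simpa using h

/-- `liminf_{x→∞} w(x)/x ≥ 1/α_c(w)` (in `[0,∞]`); in particular, if
`α_c(w) < ∞` then `∑ 1/w(n)² < ∞`, and if `α_c(w) = 0` then `w(x)/x → ∞`. -/
theorem stmt9 (w : ℕ → ℝ) (hpos : ∀ n, 0 < w n) (hmono : Monotone w)
    (hdiv : ¬ Summable (fun n : ℕ => (w n)⁻¹))
    (Winv : ℝ → ℝ)
    (hWinv : ∀ t : ℝ, 0 ≤ t → Winv (Wfun (wext w) t) = t)
    (hWinv' : ∀ y : ℝ, 0 ≤ y → Wfun (wext w) (Winv y) = y) :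
    (alphac (wext w) Winv)⁻¹
        ≤ Filter.liminf (fun x : ℝ => ENNReal.ofReal (wext w x / x)) atTop ∧
    (alphac (wext w) Winv < ⊤ → Summable (fun n : ℕ => ((w n) ^ 2)⁻¹)) ∧
    (alphac (wext w) Winv = 0 →
        Tendsto (fun x : ℝ => wext w x / x) atTop atTop) := by
  have hliminf := inv_alphac_le_liminf (monotone_wext hmono) (fun _ => hpos _) hWinv' hWinv
    (tendsto_Wfun_wext_atTop hpos hmono hdiv)
  refine ⟨hliminf, fun hfin => ?_, fun h0 => ?_⟩
  · simpa [wext] using summable_inv_sq_of_pos_liminf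
      ((ENNReal.inv_pos.2 hfin.ne).trans_le hliminf)
  · rw [h0, ENNReal.inv_zero, top_le_iff] at hliminf
    exact tendsto_atTop_of_liminf_ofReal_eq_top hliminf
end
end

section
/- Let w be a positive non-decreasing weight function with diverging W. If liminf_{x→∞} w(x)/x < 1, then I₁(w) = ∞ (i.e., α_c(w) ≥ 1). -/
open MeasureTheory Filter Topology Set
open scoped ENNReal NNReal

noncomputable section

/-!
If `w x₀ < c x₀` with `c < 1`, then for `x ≤ x₀ - w x₀` the monotonicity of `w` gives
`W x₀ - W x ≥ (x₀ - x) / w x₀ ≥ 1`, so `W⁻¹(W x + 1) ≤ x₀` and the integrand of `I₁` is at least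
`1 / w x₀ > 1 / (c x₀)` on an interval of length comparable to `x₀`. Each such `x₀` thus
contributes a fixed positive amount `(1 - c) / (2c)` to `I₁`, and since such `x₀` exist
arbitrarily far out, these contributions add up to `∞`.
-/

lemma exists_frequently_lt_of_liminf_ofReal_lt_one {ι : Type*} {l : Filter ι} {g : ι → ℝ}
    (h : liminf (fun x => ENNReal.ofReal (g x)) l < 1) :
    ∃ c : ℝ, 0 < c ∧ c < 1 ∧ ∃ᶠ x in l, g x < c := by
  obtain ⟨r, hlr, hr1⟩ := exists_between h
  have hr_top : r ≠ ⊤ := hr1.ne_top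
  refine ⟨r.toReal, ENNReal.toReal_pos (pos_of_gt hlr).ne' hr_top, ?_, ?_⟩
  · simpa using ENNReal.toReal_strict_mono ENNReal.one_ne_top hr1
  · refine (frequently_lt_of_liminf_lt (by isBoundedDefault) hlr).mono fun x hx => ?_
    calc g x ≤ max (g x) 0 := le_max_left _ _
      _ = (ENNReal.ofReal (g x)).toReal := ENNReal.toReal_ofReal'.symm
      _ < r.toReal := ENNReal.toReal_strict_mono hr_top hx

lemma setLIntegral_Ioi_eq_top_of_forall_exists_le {f : ℝ → ℝ≥0∞} {a : ℝ} {ε : ℝ≥0∞}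
    (hε : ε ≠ 0) (h : ∀ A, a ≤ A → ∃ B, A ≤ B ∧ ε ≤ ∫⁻ x in Ioc A B, f x) :
    ∫⁻ x in Ioi a, f x = ⊤ := by
  have grow : ∀ n : ℕ, ∃ B, a ≤ B ∧ n * ε ≤ ∫⁻ x in Ioc a B, f x := by
    intro n
    induction n with
    | zero => exact ⟨a, le_rfl, by simp⟩
    | succ n ih =>
      obtain ⟨B, haB, hB⟩ := ih
      obtain ⟨B', hBB', hB'⟩ := h B haB
      refine ⟨B', haB.trans hBB', ?_⟩
      rw [← Ioc_union_Ioc_eq_Ioc haB hBB', lintegral_union measurableSet_Ioc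
        (Ioc_disjoint_Ioc_of_le le_rfl), Nat.cast_succ, add_one_mul]
      exact add_le_add hB hB'
  refine eq_top_iff.2 ?_
  calc ⊤ = ⨆ n : ℕ, (n : ℝ≥0∞) * ε := by rw [← ENNReal.iSup_mul, ENNReal.iSup_natCast,
        ENNReal.top_mul hε]
    _ ≤ ∫⁻ x in Ioi a, f x := iSup_le fun n => by
      obtain ⟨B, -, hB⟩ := grow n
      exact hB.trans (lintegral_mono_set Ioc_subset_Ioi_self)

section Weight

variable {w : ℝ → ℝ}

lemma intervalIntegrable_inv_of_monotoneOn (hpos : ∀ x : ℝ, 0 ≤ x → 0 < w x)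
    (hmono : MonotoneOn w (Ici 0)) {a b : ℝ} (ha : 0 ≤ a) (hb : 0 ≤ b) :
    IntervalIntegrable (fun u => (w u)⁻¹) volume a b := by
  refine AntitoneOn.intervalIntegrable fun u hu v _ huv => ?_
  have hu0 : 0 ≤ u := (le_min ha hb).trans hu.1
  exact inv_anti₀ (hpos u hu0) (hmono hu0 (hu0.trans huv) huv)

lemma sub_div_le_Wfun_sub (hpos : ∀ x : ℝ, 0 ≤ x → 0 < w x) (hmono : MonotoneOn w (Ici 0))
    {a b : ℝ} (ha : 0 ≤ a) (hab : a ≤ b) :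
    (b - a) / w b ≤ Wfun w b - Wfun w a := by
  have hb := ha.trans hab
  rw [Wfun, Wfun, intervalIntegral.integral_interval_sub_left
    (intervalIntegrable_inv_of_monotoneOn hpos hmono le_rfl hb)
    (intervalIntegrable_inv_of_monotoneOn hpos hmono le_rfl ha)]
  calc (b - a) / w b = ∫ _ in a..b, (w b)⁻¹ := by simp [div_eq_mul_inv]
    _ ≤ ∫ u in a..b, (w u)⁻¹ :=
      intervalIntegral.integral_mono_on hab intervalIntegrable_const
        (intervalIntegrable_inv_of_monotoneOn hpos hmono ha hb) fun u hu =>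
          inv_anti₀ (hpos u (ha.trans hu.1)) (hmono (ha.trans hu.1) hb hu.2)

lemma Winv_mem_Icc (hpos : ∀ x : ℝ, 0 ≤ x → 0 < w x) (hmono : MonotoneOn w (Ici 0))
    {Winv : ℝ → ℝ} (hWinv : ∀ t : ℝ, 0 ≤ t → Winv (Wfun w t) = t) {x x₀ y : ℝ}
    (hx : 0 ≤ x) (hxx₀ : x ≤ x₀) (hy : y ∈ Icc (Wfun w x) (Wfun w x₀)) :
    Winv y ∈ Icc x x₀ := by
  have hcont : ContinuousOn (Wfun w) (uIcc 0 x₀) :=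
    intervalIntegral.continuousOn_primitive_interval'
      (intervalIntegrable_inv_of_monotoneOn hpos hmono le_rfl (hx.trans hxx₀)) left_mem_uIcc
  obtain ⟨s, hs, rfl⟩ := intermediate_value_Icc hxx₀
    (hcont.mono (uIcc_of_le (hx.trans hxx₀) ▸ Icc_subset_Icc_left hx)) hy
  rwa [hWinv s (hx.trans hs.1)]

lemma inv_le_inv_comp_Winv (hpos : ∀ x : ℝ, 0 ≤ x → 0 < w x) (hmono : MonotoneOn w (Ici 0))
    {Winv : ℝ → ℝ} (hWinv : ∀ t : ℝ, 0 ≤ t → Winv (Wfun w t) = t) {α x x₀ : ℝ}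
    (hα : 0 ≤ α) (hx : 0 ≤ x) (hx₀ : 0 ≤ x₀) (hxx₀ : x ≤ x₀ - α * w x₀) :
    (w x₀)⁻¹ ≤ (w (Winv (Wfun w x + α)))⁻¹ := by
  have hw₀ := hpos x₀ hx₀
  have hxle : x ≤ x₀ := by nlinarith
  have hα_le : α ≤ Wfun w x₀ - Wfun w x :=
    ((le_div_iff₀ hw₀).2 (by linarith)).trans (sub_div_le_Wfun_sub hpos hmono hx hxle)
  have hs := Winv_mem_Icc hpos hmono hWinv hx hxle
    (y := Wfun w x + α) ⟨by linarith, by linarith⟩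
  exact inv_anti₀ (hpos _ (hx.trans hs.1)) (hmono (hx.trans hs.1) hx₀ hs.2)

lemma ofReal_div_le_setLIntegral_Ioc (hpos : ∀ x : ℝ, 0 ≤ x → 0 < w x)
    (hmono : MonotoneOn w (Ici 0)) {Winv : ℝ → ℝ}
    (hWinv : ∀ t : ℝ, 0 ≤ t → Winv (Wfun w t) = t) {α A x₀ : ℝ}
    (hα : 0 ≤ α) (hA : 0 ≤ A) (hx₀ : 0 ≤ x₀) :
    ENNReal.ofReal ((x₀ - α * w x₀ - A) / w x₀) ≤
      ∫⁻ x in Ioc A (x₀ - α * w x₀), ENNReal.ofReal (w (Winv (Wfun w x + α)))⁻¹ := by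
  have hw₀ := (hpos x₀ hx₀).le
  calc ENNReal.ofReal ((x₀ - α * w x₀ - A) / w x₀)
      = ENNReal.ofReal (w x₀)⁻¹ * volume (Ioc A (x₀ - α * w x₀)) := by
        rw [Real.volume_Ioc, ← ENNReal.ofReal_mul (inv_nonneg.2 hw₀), div_eq_inv_mul]
    _ = ∫⁻ _ in Ioc A (x₀ - α * w x₀), ENNReal.ofReal (w x₀)⁻¹ := (setLIntegral_const _ _).symm
    _ ≤ _ := setLIntegral_mono' measurableSet_Ioc fun x hx => ENNReal.ofReal_le_ofReal
        (inv_le_inv_comp_Winv hpos hmono hWinv hα (hA.trans hx.1.le) hx₀ hx.2)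

lemma exists_ofReal_le_setLIntegral_Ioc (hpos : ∀ x : ℝ, 0 ≤ x → 0 < w x)
    (hmono : MonotoneOn w (Ici 0)) {Winv : ℝ → ℝ}
    (hWinv : ∀ t : ℝ, 0 ≤ t → Winv (Wfun w t) = t) {c : ℝ} (hc0 : 0 < c) (hc1 : c < 1)
    (hfreq : ∃ᶠ x in atTop, w x / x < c) (A : ℝ) (hA : 0 ≤ A) :
    ∃ B, A ≤ B ∧ ENNReal.ofReal ((1 - c) / (2 * c)) ≤
      ∫⁻ x in Ioc A B, ENNReal.ofReal (w (Winv (Wfun w x + 1)))⁻¹ := by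
  obtain ⟨x₀, hx₀A, hx₀c⟩ := frequently_atTop.1 hfreq (max (2 * A / (1 - c)) 1)
  have hx₀ : 0 < x₀ := one_pos.trans_le ((le_max_right _ _).trans hx₀A)
  have hA₀ : A ≤ (1 - c) * x₀ / 2 := by
    have := (le_max_left _ _).trans hx₀A
    rw [div_le_iff₀ (by linarith)] at this
    linarith
  have hw₀ : w x₀ < c * x₀ := (div_lt_iff₀ hx₀).1 hx₀c
  have hpos₀ := hpos x₀ hx₀.le
  refine ⟨x₀ - 1 * w x₀, by nlinarith, le_trans (ENNReal.ofReal_le_ofReal ?_)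
    (ofReal_div_le_setLIntegral_Ioc hpos hmono hWinv zero_le_one hA hx₀.le)⟩
  rw [le_div_iff₀ hpos₀]
  calc (1 - c) / (2 * c) * w x₀ ≤ (1 - c) / (2 * c) * (c * x₀) :=
        mul_le_mul_of_nonneg_left hw₀.le (div_nonneg (by linarith) (by linarith))
    _ = (1 - c) * x₀ / 2 := by field_simp
    _ ≤ x₀ - 1 * w x₀ - A := by linarith

end Weight

theorem stmt10_general (w : ℝ → ℝ) (hpos : ∀ x : ℝ, 0 ≤ x → 0 < w x)
    (hmono : MonotoneOn w (Ici (0:ℝ)))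
    (Winv : ℝ → ℝ)
    (hWinv : ∀ t : ℝ, 0 ≤ t → Winv (Wfun w t) = t)
    (hliminf : Filter.liminf (fun x : ℝ => ENNReal.ofReal (w x / x)) atTop < 1) :
    Ia w Winv 1 = ⊤ := by
  obtain ⟨c, hc0, hc1, hfreq⟩ := exists_frequently_lt_of_liminf_ofReal_lt_one hliminf
  exact setLIntegral_Ioi_eq_top_of_forall_exists_le
    (ENNReal.ofReal_pos.2 (div_pos (by linarith) (by linarith))).ne'
    (exists_ofReal_le_setLIntegral_Ioc hpos hmono hWinv hc0 hc1 hfreq)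

/-- if `liminf_{x→∞} w(x)/x < 1` then `I₁(w) = ∞`. -/
theorem stmt10 (w : ℝ → ℝ) (hpos : ∀ x : ℝ, 0 ≤ x → 0 < w x)
    (hmono : MonotoneOn w (Ici (0:ℝ)))
    (hWdiv : Tendsto (Wfun w) atTop atTop)
    (Winv : ℝ → ℝ)
    (hWinv : ∀ t : ℝ, 0 ≤ t → Winv (Wfun w t) = t)
    (hWinv' : ∀ y : ℝ, 0 ≤ y → Wfun w (Winv y) = y)
    (hliminf : Filter.liminf (fun x : ℝ => ENNReal.ofReal (w x / x)) atTop < 1) :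
    Ia w Winv 1 = ⊤ :=
  stmt10_general w hpos hmono Winv hWinv hliminf
end
end

section
/- Let w be a positive non-decreasing weight function with diverging W and α_c(w) < ∞. For any δ > α_c(w), x / W⁻¹(W(x)+δ) → 0 as x → ∞. -/
open MeasureTheory Filter Topology Set
open scoped ENNReal NNReal

noncomputable section

/-! Fix `α < δ` with `I_α(w) < ∞` and put `m = W⁻¹(W x + α)`, `y = W⁻¹(W x + δ)`,
so that `x ≤ m ≤ y`. Beyond `m` the slope `1 / w` of `W` is at most `1 / w m`, hence
`δ - α = W y - W m ≤ y / w m`. On `(x / 2, x]` the integrand `1 / w (W⁻¹ (W t + α))` of `I_α`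
is at least `1 / w m`, so `x / y ≤ 2 / (δ - α) * ∫_{x/2}^∞ 1 / w (W⁻¹ (W t + α)) dt`,
a tail of a convergent integral. -/

theorem tendsto_setLIntegral_Ioi_atTop {f : ℝ → ℝ≥0∞} {a : ℝ} (hf : ∫⁻ t in Ioi a, f t ≠ ∞) :
    Tendsto (fun x => ∫⁻ t in Ioi x, f t) atTop (𝓝 0) := by
  set ν := (volume.restrict (Ioi a)).withDensity f
  have hν : ∀ x, a ≤ x → ∫⁻ t in Ioi x, f t = ν (Ioi x) := fun x hx => by
    rw [withDensity_apply', Measure.restrict_restrict measurableSet_Ioi, Ioi_inter_Ioi,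
      sup_eq_left.2 hx]
  have hempty : ⋂ x : ℝ, Ioi x = ∅ :=
    eq_empty_of_forall_notMem fun t ht => lt_irrefl t (mem_iInter.1 ht t)
  have h := tendsto_measure_iInter_atTop (μ := ν) (fun _ => measurableSet_Ioi.nullMeasurableSet)
    antitone_Ioi ⟨a, hν a le_rfl ▸ hf⟩
  rw [hempty, measure_empty] at h
  exact h.congr' ((eventually_ge_atTop a).mono fun x hx => (hν x hx).symm)

theorem ofReal_mul_le_setLIntegral_Ioc {f : ℝ → ℝ≥0∞} {a b c : ℝ} (hab : a ≤ b)
    (hf : ∀ t ∈ Ioc a b, ENNReal.ofReal c ≤ f t) :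
    ENNReal.ofReal ((b - a) * c) ≤ ∫⁻ t in Ioc a b, f t := by
  calc ENNReal.ofReal ((b - a) * c) = ENNReal.ofReal c * volume (Ioc a b) := by
        rw [Real.volume_Ioc, ← ENNReal.ofReal_mul' (sub_nonneg.2 hab), mul_comm]
    _ = ∫⁻ _ in Ioc a b, ENNReal.ofReal c := (setLIntegral_const _ _).symm
    _ ≤ ∫⁻ t in Ioc a b, f t := setLIntegral_mono' measurableSet_Ioc hf

section

variable {w Winv : ℝ → ℝ}

theorem Wfun_zero (w : ℝ → ℝ) : Wfun w 0 = 0 := intervalIntegral.integral_same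

theorem antitoneOn_inv_weight (hpos : ∀ x : ℝ, 0 ≤ x → 0 < w x)
    (hmono : MonotoneOn w (Ici 0)) : AntitoneOn (fun u => (w u)⁻¹) (Ici 0) :=
  fun _ hu _ hv huv => inv_anti₀ (hpos _ hu) (hmono hu hv huv)

theorem intervalIntegrable_inv_weight (hpos : ∀ x : ℝ, 0 ≤ x → 0 < w x)
    (hmono : MonotoneOn w (Ici 0)) {a b : ℝ} (ha : 0 ≤ a) (hab : a ≤ b) :
    IntervalIntegrable (fun u => (w u)⁻¹) volume a b :=
  AntitoneOn.intervalIntegrable <| (antitoneOn_inv_weight hpos hmono).mono <| by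
    rw [uIcc_of_le hab]; exact fun _ hu => ha.trans hu.1

theorem Wfun_sub_Wfun (hpos : ∀ x : ℝ, 0 ≤ x → 0 < w x) (hmono : MonotoneOn w (Ici 0))
    {a b : ℝ} (ha : 0 ≤ a) (hab : a ≤ b) :
    Wfun w b - Wfun w a = ∫ u in a..b, (w u)⁻¹ := by
  rw [Wfun, Wfun, intervalIntegral.integral_interval_sub_left
    (intervalIntegrable_inv_weight hpos hmono le_rfl (ha.trans hab))
    (intervalIntegrable_inv_weight hpos hmono le_rfl ha)]

theorem Wfun_monotoneOn (hpos : ∀ x : ℝ, 0 ≤ x → 0 < w x) (hmono : MonotoneOn w (Ici 0)) :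
    MonotoneOn (Wfun w) (Ici 0) := fun a ha b _ hab => by
  rw [← sub_nonneg, Wfun_sub_Wfun hpos hmono ha hab]
  exact intervalIntegral.integral_nonneg hab fun u hu => (inv_pos.2 (hpos u (ha.trans hu.1))).le

theorem Wfun_sub_Wfun_le (hpos : ∀ x : ℝ, 0 ≤ x → 0 < w x) (hmono : MonotoneOn w (Ici 0))
    {a b : ℝ} (ha : 0 ≤ a) (hab : a ≤ b) :
    Wfun w b - Wfun w a ≤ (b - a) * (w a)⁻¹ := by
  rw [Wfun_sub_Wfun hpos hmono ha hab]
  simpa [mul_comm] using intervalIntegral.integral_mono_on hab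
    (intervalIntegrable_inv_weight hpos hmono ha hab) intervalIntegrable_const
    fun u hu => antitoneOn_inv_weight hpos hmono ha (ha.trans hu.1) hu.1

theorem surjOn_Wfun (hpos : ∀ x : ℝ, 0 ≤ x → 0 < w x) (hmono : MonotoneOn w (Ici 0))
    (hWdiv : Tendsto (Wfun w) atTop atTop) : SurjOn (Wfun w) (Ici 0) (Ici 0) := by
  intro y hy
  obtain ⟨b, hyb, hb⟩ := ((hWdiv.eventually_ge_atTop y).and (eventually_ge_atTop 0)).exists
  have hcont : ContinuousOn (Wfun w) (Icc 0 b) := by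
    rw [← uIcc_of_le hb]
    exact intervalIntegral.continuousOn_primitive_interval'
      (intervalIntegrable_inv_weight hpos hmono le_rfl hb) left_mem_uIcc
  obtain ⟨t, ht, hWt⟩ := intermediate_value_Icc hb hcont ⟨(Wfun_zero w).symm ▸ hy, hyb⟩
  exact ⟨t, ht.1, hWt⟩

theorem Wfun_nonneg_s13 (hpos : ∀ x : ℝ, 0 ≤ x → 0 < w x) (hmono : MonotoneOn w (Ici 0))
    {x : ℝ} (hx : 0 ≤ x) : 0 ≤ Wfun w x :=
  Wfun_zero w ▸ Wfun_monotoneOn hpos hmono self_mem_Ici hx hx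

theorem monotoneOn_Winv (hpos : ∀ x : ℝ, 0 ≤ x → 0 < w x) (hmono : MonotoneOn w (Ici 0))
    (hWinv : LeftInvOn Winv (Wfun w) (Ici 0)) (hsurj : SurjOn (Wfun w) (Ici 0) (Ici 0)) :
    MonotoneOn Winv (Ici 0) :=
  Function.monotoneOn_of_rightInvOn_of_mapsTo (Wfun_monotoneOn hpos hmono)
    (hWinv.rightInvOn_image.mono hsurj) (hWinv.mapsTo hsurj)

theorem le_Winv_Wfun_add (hpos : ∀ x : ℝ, 0 ≤ x → 0 < w x) (hmono : MonotoneOn w (Ici 0))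
    (hWinv : LeftInvOn Winv (Wfun w) (Ici 0)) (hsurj : SurjOn (Wfun w) (Ici 0) (Ici 0))
    {x α : ℝ} (hx : 0 ≤ x) (hα : 0 ≤ α) : x ≤ Winv (Wfun w x + α) := by
  have hWx := Wfun_nonneg_s13 hpos hmono hx
  calc x = Winv (Wfun w x) := (hWinv hx).symm
    _ ≤ Winv (Wfun w x + α) :=
      monotoneOn_Winv hpos hmono hWinv hsurj hWx (add_nonneg hWx hα) (le_add_of_nonneg_right hα)

theorem ofReal_le_setLIntegral_inv_weight (hpos : ∀ x : ℝ, 0 ≤ x → 0 < w x)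
    (hmono : MonotoneOn w (Ici 0)) (hWinv : LeftInvOn Winv (Wfun w) (Ici 0))
    (hsurj : SurjOn (Wfun w) (Ici 0) (Ici 0)) {α δ x : ℝ} (hα : 0 ≤ α) (hαδ : α ≤ δ)
    (hx : 0 < x) :
    ENNReal.ofReal (x / 2 * ((δ - α) / Winv (Wfun w x + δ))) ≤
      ∫⁻ t in Ioc (x / 2) x, ENNReal.ofReal (w (Winv (Wfun w t + α)))⁻¹ := by
  have hWinvMono := monotoneOn_Winv hpos hmono hWinv hsurj
  have hright : RightInvOn Winv (Wfun w) (Ici 0) := hWinv.rightInvOn_image.mono hsurj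
  have hWx := Wfun_nonneg_s13 hpos hmono hx.le
  have hWxα : 0 ≤ Wfun w x + α := add_nonneg hWx hα
  have hWxδ : 0 ≤ Wfun w x + δ := add_nonneg hWx (hα.trans hαδ)
  set m := Winv (Wfun w x + α)
  set y := Winv (Wfun w x + δ)
  have hm : 0 ≤ m := hx.le.trans (le_Winv_Wfun_add hpos hmono hWinv hsurj hx.le hα)
  have hmy : m ≤ y := hWinvMono hWxα hWxδ (by linarith)
  have hy : 0 < y := hx.trans_le (le_Winv_Wfun_add hpos hmono hWinv hsurj hx.le (hα.trans hαδ))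
  have hwm : (δ - α) / y ≤ (w m)⁻¹ := by
    have h := Wfun_sub_Wfun_le hpos hmono hm hmy
    rw [hright.eq hWxδ, hright.eq hWxα] at h
    rw [div_le_iff₀ hy]
    nlinarith [inv_pos.2 (hpos m hm)]
  calc ENNReal.ofReal (x / 2 * ((δ - α) / y))
        = ENNReal.ofReal ((x - x / 2) * ((δ - α) / y)) := by ring_nf
    _ ≤ _ := ofReal_mul_le_setLIntegral_Ioc (by linarith) fun t ht => by
        have ht0 : 0 ≤ t := by linarith [ht.1]
        have hWtα : 0 ≤ Wfun w t + α := add_nonneg (Wfun_nonneg_s13 hpos hmono ht0) hα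
        exact ENNReal.ofReal_le_ofReal (hwm.trans (antitoneOn_inv_weight hpos hmono
          (hWinv.mapsTo hsurj hWtα) hm (hWinvMono hWtα hWxα
            (add_le_add_left (Wfun_monotoneOn hpos hmono ht0 hx.le ht.2) α))))

theorem div_Winv_le_toReal_setLIntegral_Ioi (hpos : ∀ x : ℝ, 0 ≤ x → 0 < w x)
    (hmono : MonotoneOn w (Ici 0)) (hWinv : LeftInvOn Winv (Wfun w) (Ici 0))
    (hsurj : SurjOn (Wfun w) (Ici 0) (Ici 0)) {α δ x : ℝ} (hα : 0 ≤ α) (hαδ : α < δ)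
    (hIα : Ia w Winv α ≠ ∞) (hx : 0 < x) :
    x / Winv (Wfun w x + δ) ≤
      2 / (δ - α) *
        (∫⁻ t in Ioi (x / 2), ENNReal.ofReal (w (Winv (Wfun w t + α)))⁻¹).toReal := by
  have hJ : ∫⁻ t in Ioi (x / 2), ENNReal.ofReal (w (Winv (Wfun w t + α)))⁻¹ ≠ ∞ :=
    ne_top_of_le_ne_top hIα (lintegral_mono_set (Ioi_subset_Ioi (by linarith)))
  have hchunk := (ofReal_le_setLIntegral_inv_weight hpos hmono hWinv hsurj hα hαδ.le hx).trans
    (lintegral_mono_set Ioc_subset_Ioi_self)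
  have hy : 0 < Winv (Wfun w x + δ) :=
    hx.trans_le (le_Winv_Wfun_add hpos hmono hWinv hsurj hx.le (hα.trans hαδ.le))
  calc x / Winv (Wfun w x + δ) = 2 / (δ - α) * (x / 2 * ((δ - α) / Winv (Wfun w x + δ))) := by
        field_simp [(sub_pos.2 hαδ).ne']
    _ ≤ _ := by
        gcongr
        exact (ENNReal.ofReal_le_iff_le_toReal hJ).1 hchunk

end

theorem stmt13_general (w : ℝ → ℝ) (hpos : ∀ x : ℝ, 0 ≤ x → 0 < w x)
    (hmono : MonotoneOn w (Ici (0:ℝ)))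
    (hWdiv : Tendsto (Wfun w) atTop atTop)
    (Winv : ℝ → ℝ)
    (hWinv : ∀ t : ℝ, 0 ≤ t → Winv (Wfun w t) = t)
    (δ : ℝ) (hδ : alphac w Winv < ENNReal.ofReal δ) :
    Tendsto (fun x : ℝ => x / Winv (Wfun w x + δ)) atTop (nhds 0) := by
  obtain ⟨α, ⟨hα, hIα⟩, hαδ⟩ : ∃ α, (0 < α ∧ Ia w Winv α < ⊤) ∧ α < δ := by
    obtain ⟨_, ⟨α, hα, rfl⟩, hlt⟩ := sInf_lt_iff.1 hδ
    exact ⟨α, hα, (ENNReal.ofReal_lt_ofReal_iff_of_nonneg hα.1.le).1 hlt⟩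
  have hsurj := surjOn_Wfun hpos hmono hWdiv
  have htail := (ENNReal.tendsto_toReal ENNReal.zero_ne_top).comp
    ((tendsto_setLIntegral_Ioi_atTop hIα.ne).comp (tendsto_id.atTop_div_const two_pos))
  refine tendsto_of_tendsto_of_tendsto_of_le_of_le' tendsto_const_nhds
    (by simpa using htail.const_mul (2 / (δ - α))) ?_ ?_
  · filter_upwards [eventually_gt_atTop 0] with x hx
    exact div_nonneg hx.le (hx.le.trans (le_Winv_Wfun_add hpos hmono hWinv hsurj hx.le
      (hα.le.trans hαδ.le)))
  · filter_upwards [eventually_gt_atTop 0] with x hx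
    exact div_Winv_le_toReal_setLIntegral_Ioi hpos hmono hWinv hsurj hα.le hαδ hIα.ne hx

/-- if `α_c(w) < ∞` and `δ > α_c(w)`, then `x / W⁻¹(W(x)+δ) → 0` as
`x → ∞`. -/
theorem stmt13 (w : ℝ → ℝ) (hpos : ∀ x : ℝ, 0 ≤ x → 0 < w x)
    (hmono : MonotoneOn w (Ici (0:ℝ)))
    (hWdiv : Tendsto (Wfun w) atTop atTop)
    (Winv : ℝ → ℝ)
    (hWinv : ∀ t : ℝ, 0 ≤ t → Winv (Wfun w t) = t)
    (hWinv' : ∀ y : ℝ, 0 ≤ y → Wfun w (Winv y) = y)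
    (δ : ℝ) (hδ : alphac w Winv < ENNReal.ofReal δ) :
    Tendsto (fun x : ℝ => x / Winv (Wfun w x + δ)) atTop (nhds 0) :=
  stmt13_general w hpos hmono hWdiv Winv hWinv δ hδ
end
end
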